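/- arXiv:2402.04604 — 2 statements merged into one kernel-verified Lean document; each statement's English description precedes it below -/
import Mathlib

section
/- Suppose n = [L:K] = 2m+1 is odd and σ_0 = 1, σ_1, …, σ_m ∈ G are such that G = {1, σ_1, σ_1⁻¹, …, σ_m, σ_m⁻¹} is a listing of G without repetitions. Then the space Sym_K(L) of symmetric K-bilinear forms on L is the internal direct sum A^{σ_0} ⊕ A^{σ_1} ⊕ ⋯ ⊕ A^{σ_m}; moreover each A^{σ_i} has K-dimension n and every nonzero form belonging to any A^{σ_i} is nondegenerate. -/
open Module

/-- The symmetric `K`-bilinear form `φ_{b,σ}(x,y) = Tr_{L/K}(b·(x·σ(y) + σ(x)·y))`,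
as a bilinear form `L →ₗ[K] L →ₗ[K] K`. -/
noncomputable def phi (K L : Type*) [Field K] [Field L] [Algebra K L]
    (b : L) (σ : L ≃ₐ[K] L) : L →ₗ[K] L →ₗ[K] K :=
  (Algebra.traceForm K L).compl₁₂ (LinearMap.mulLeft K b) σ.toLinearMap +
    (Algebra.traceForm K L).compl₁₂ ((LinearMap.mulLeft K b).comp σ.toLinearMap) LinearMap.id

/-- The `K`-subspace `A^σ = {φ_{b,σ} : b ∈ L}` of the space of bilinear forms on `L`. -/
noncomputable def Asub (K L : Type*) [Field K] [Field L] [Algebra K L]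
    (σ : L ≃ₐ[K] L) : Submodule K (L →ₗ[K] L →ₗ[K] K) :=
  Submodule.span K (Set.range fun b : L => phi K L b σ)

/-- `Sym_K(L)`: the `K`-subspace of symmetric bilinear forms on `L`. -/
def symSubmodule (K L : Type*) [Field K] [Field L] [Algebra K L] :
    Submodule K (L →ₗ[K] L →ₗ[K] K) where
  carrier := {B | ∀ x y : L, B x y = B y x}
  add_mem' := by
    intro B C hB hC x y
    simp [hB x y, hC x y]
  zero_mem' := by intro x y; simp
  smul_mem' := by
    intro c B hB x y
    simp [hB x y]

/-!
Every `K`-bilinear form on `L` is `(x, y) ↦ Tr(x · ∑_τ c_τ τ(y))` for a unique `c : G → L`: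
`c ↦ ∑_τ c_τ τ` is injective by Dedekind's independence of characters, the trace form is
nondegenerate, and both sides have dimension `n²`. In these coordinates `φ_{b,σ}` has
coefficient `b` at `σ`, `σ⁻¹(b)` at `σ⁻¹` and `0` elsewhere, while a form is symmetric iff
`c_τ = τ(c_{τ⁻¹})` for all `τ`. So `Sym_K(L)` splits along the partition of `G` into the pairs
`{σ_i, σ_i⁻¹}`; as `|G|` is odd, `1` is the only self-inverse element, and its summand needs
`char K ≠ 2` (there `φ_{b,1}` has coefficient `2b`).

If `φ_{b,σ}(x, ·) = 0` then `σ⁻¹(bx) = -b σ(x)`; taking norms gives `N(bx) = (-1)ⁿ N(bx)`, so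
`bx = 0` because `n` is odd and `char K ≠ 2`.
-/

open Function

section

theorem eq_one_of_inv_eq_self_of_odd_card {G : Type*} [Group G] (hodd : Odd (Nat.card G))
    {g : G} (hg : g⁻¹ = g) : g = 1 := by
  have hdvd : orderOf g ∣ 2 := orderOf_dvd_of_pow_eq_one (by rw [sq, ← inv_eq_iff_mul_eq_one.mp hg])
  have hodd' : Odd (orderOf g) := hodd.of_dvd_nat (orderOf_dvd_natCard g)
  rcases (Nat.dvd_prime Nat.prime_two).mp hdvd with h | h
  · exact orderOf_eq_one_iff.mp h
  · exact absurd (h ▸ hodd') (by decide)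

def invPair {G : Type*} [Inv G] (g : G) : Set G := {g, g⁻¹}

theorem disjoint_invPair {G : Type*} [Group G] {g h : G} :
    Disjoint (invPair g) (invPair h) ↔ g ≠ h ∧ g ≠ h⁻¹ := by
  have hinv : h = g⁻¹ ↔ g = h⁻¹ := by rw [eq_comm, inv_eq_iff_eq_inv]
  simp only [invPair, Set.disjoint_insert_left, Set.disjoint_insert_right,
    Set.disjoint_singleton, Set.mem_insert_iff, Set.mem_singleton_iff, ne_eq, inv_inj, hinv]
  tauto

def piSupported (R : Type*) {ι : Type*} (M : Type*) [Semiring R] [AddCommMonoid M] [Module R M]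
    (s : Set ι) : Submodule R (ι → M) where
  carrier := {f | ∀ i ∉ s, f i = 0}
  add_mem' hf hg i hi := by simp [hf i hi, hg i hi]
  zero_mem' _ _ := rfl
  smul_mem' c f hf i hi := by simp [hf i hi]

variable {R ι κ M : Type*} [Semiring R] [AddCommMonoid M] [Module R M]

theorem piSupported_mono {s t : Set ι} (h : s ⊆ t) : piSupported R M s ≤ piSupported R M t :=
  fun _ hf i hi => hf i fun hs => hi (h hs)

theorem disjoint_piSupported {s t : Set ι} (h : Disjoint s t) :
    Disjoint (piSupported R M s) (piSupported R M t) := by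
  rw [Submodule.disjoint_def]
  intro f hs ht
  funext i
  by_cases hi : i ∈ s
  · exact ht i (Set.disjoint_left.mp h hi)
  · exact hs i hi

theorem iSupIndep_piSupported {S : κ → Set ι} (h : Pairwise (Disjoint on S)) :
    iSupIndep fun k => piSupported R M (S k) := fun _ =>
  (disjoint_piSupported disjoint_compl_right).mono_right <| iSup₂_le fun _ hj =>
    piSupported_mono (Set.subset_compl_iff_disjoint_left.mpr (h hj.symm))

theorem sum_indicator_eq_self [Fintype κ] {S : κ → Set ι} (hdisj : Pairwise (Disjoint on S))
    (hcover : ⋃ k, S k = Set.univ) (f : ι → M) : ∑ k, (S k).indicator f = f := by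
  have := Finset.indicator_biUnion Finset.univ S (f := f) (hdisj.set_pairwise _)
  simp only [Finset.mem_univ, Set.iUnion_true, hcover, Set.indicator_univ] at this
  rw [Finset.sum_fn, ← this]

end

section

variable {K L : Type*} [Field K] [Field L] [Algebra K L]

theorem phi_apply (b : L) (σ : L ≃ₐ[K] L) (x y : L) :
    phi K L b σ x y = Algebra.trace K L (b * x * σ y) + Algebra.trace K L (b * σ x * y) := by
  simp [phi, Algebra.traceForm_apply, mul_assoc]

theorem phi_comm (b : L) (σ : L ≃ₐ[K] L) (x y : L) : phi K L b σ x y = phi K L b σ y x := by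
  rw [phi_apply, phi_apply, add_comm]
  ring_nf

theorem Asub_le_symSubmodule (σ : L ≃ₐ[K] L) : Asub K L σ ≤ symSubmodule K L := by
  rw [Asub, Submodule.span_le]
  rintro _ ⟨b, rfl⟩
  exact phi_comm b σ

theorem trace_mul_algEquiv_apply (σ : L ≃ₐ[K] L) (a y : L) :
    Algebra.trace K L (a * σ y) = Algebra.trace K L (σ⁻¹ a * y) := by
  rw [← Algebra.trace_eq_of_algEquiv σ (σ⁻¹ a * y), map_mul (σ : L ≃ₐ[K] L), AlgEquiv.aut_inv,
    AlgEquiv.apply_symm_apply]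

variable [FiniteDimensional K L] [Algebra.IsSeparable K L]

theorem phi_nondegenerate (h2 : (2 : K) ≠ 0) (hodd : Odd (finrank K L)) (σ : L ≃ₐ[K] L)
    {b : L} (hb : b ≠ 0) {x : L} (hx : ∀ y, phi K L b σ x y = 0) : x = 0 := by
  have hrel : σ⁻¹ (b * x) = -(b * σ x) := by
    rw [eq_neg_iff_add_eq_zero]
    refine (traceForm_nondegenerate K L).1 _ fun y => ?_
    rw [Algebra.traceForm_apply, add_mul, map_add, ← trace_mul_algEquiv_apply, ← hx y, phi_apply]
  have hnorm : Algebra.norm K (b * x) = -Algebra.norm K (b * x) := by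
    calc Algebra.norm K (b * x) = Algebra.norm K (σ⁻¹ (b * x)) :=
          (Algebra.norm_eq_of_algEquiv _ _).symm
      _ = Algebra.norm K (algebraMap K L (-1) * (b * σ x)) := by rw [hrel]; simp
      _ = -Algebra.norm K (b * x) := by
        rw [map_mul, Algebra.norm_algebraMap, hodd.neg_one_pow, map_mul, map_mul,
          Algebra.norm_eq_of_algEquiv]
        ring
  have hbx : b * x = 0 := by
    rw [← Algebra.norm_eq_zero_iff (R := K)]
    have : (2 : K) * Algebra.norm K (b * x) = 0 := by linear_combination hnorm
    exact (mul_eq_zero.mp this).resolve_left h2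
  exact (mul_eq_zero.mp hbx).resolve_left hb

end

section

variable (K L : Type*) [Field K] [Field L] [Algebra K L] [FiniteDimensional K L]

noncomputable def galoisCombination : ((L ≃ₐ[K] L) → L) →ₗ[K] L →ₗ[K] L :=
  (Fintype.linearCombination L fun τ : L ≃ₐ[K] L => τ.toLinearMap).restrictScalars K

noncomputable def twistedTraceForm : ((L ≃ₐ[K] L) → L) →ₗ[K] L →ₗ[K] L →ₗ[K] K where
  toFun d := (Algebra.traceForm K L).compl₂ (galoisCombination K L d)
  map_add' d e := by ext; simp [mul_add]
  map_smul' c d := by ext; simp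

variable {K L}

theorem galoisCombination_apply (d : (L ≃ₐ[K] L) → L) (y : L) :
    galoisCombination K L d y = ∑ τ, d τ * τ y := by
  simp [galoisCombination, Fintype.linearCombination_apply, LinearMap.sum_apply]

theorem twistedTraceForm_apply (d : (L ≃ₐ[K] L) → L) (x y : L) :
    twistedTraceForm K L d x y = Algebra.trace K L (x * ∑ τ, d τ * τ y) := by
  rw [← galoisCombination_apply]
  rfl

theorem galoisCombination_injective : Function.Injective (galoisCombination K L) :=
  linearIndependent_iff_injective_fintypeLinearCombination.mp <|
    (linearIndependent_toLinearMap K L L).comp (fun τ : L ≃ₐ[K] L => (τ : L →ₐ[K] L))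
      AlgEquiv.coe_toAlgHom_injective

theorem twistedTraceForm_injective [Algebra.IsSeparable K L] :
    Function.Injective (twistedTraceForm K L) := by
  refine (injective_iff_map_eq_zero _).2 fun d hd => galoisCombination_injective ?_
  rw [map_zero]
  ext y
  exact (traceForm_nondegenerate K L).2 _ fun x => LinearMap.congr_fun₂ hd x y

theorem twistedTraceForm_surjective [IsGalois K L] :
    Function.Surjective (twistedTraceForm K L) := by
  have hdim : finrank K ((L ≃ₐ[K] L) → L) = finrank K (L →ₗ[K] L →ₗ[K] K) := by
    simp [Module.finrank_pi_fintype, Module.finrank_linearMap, ← Nat.card_eq_fintype_card,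
      IsGalois.card_aut_eq_finrank]
  exact (LinearMap.injective_iff_surjective_of_finrank_eq_finrank (K := K)
    (V := (L ≃ₐ[K] L) → L) (V₂ := L →ₗ[K] L →ₗ[K] K) hdim).1 twistedTraceForm_injective

theorem twistedTraceForm_flip (d : (L ≃ₐ[K] L) → L) (x y : L) :
    twistedTraceForm K L d y x = twistedTraceForm K L (fun τ => τ (d τ⁻¹)) x y := by
  simp only [twistedTraceForm_apply, Finset.mul_sum, map_sum]
  refine Fintype.sum_equiv (Equiv.inv _) _ _ fun τ => ?_
  rw [Equiv.inv_apply, inv_inv, ← mul_assoc, trace_mul_algEquiv_apply, map_mul τ⁻¹]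
  ring_nf

theorem twistedTraceForm_single [DecidableEq (L ≃ₐ[K] L)] (τ : L ≃ₐ[K] L) (c x y : L) :
    twistedTraceForm K L (Pi.single τ c) x y = Algebra.trace K L (x * (c * τ y)) := by
  simp [twistedTraceForm_apply, Pi.single_apply]

end

section

variable {K L : Type*} [Field K] [Field L] [Algebra K L]

open scoped Classical in
noncomputable def phiCoeff (σ : L ≃ₐ[K] L) : L →ₗ[K] (L ≃ₐ[K] L) → L :=
  LinearMap.single K (fun _ => L) σ + LinearMap.single K (fun _ => L) σ⁻¹ ∘ₗ σ⁻¹.toLinearMap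

open scoped Classical in
theorem phiCoeff_apply (σ : L ≃ₐ[K] L) (b : L) :
    phiCoeff σ b = Pi.single σ b + Pi.single σ⁻¹ (σ⁻¹ b) := by
  simp [phiCoeff]

theorem phiCoeff_mem_piSupported (σ : L ≃ₐ[K] L) (b : L) :
    phiCoeff σ b ∈ piSupported K L (invPair σ) := by
  classical
  intro τ hτ
  simp only [invPair, Set.mem_insert_iff, Set.mem_singleton_iff, not_or] at hτ
  simp [phiCoeff_apply, hτ.1, hτ.2]

theorem indicator_mem_range_phiCoeff (h2 : (2 : K) ≠ 0) {σ : L ≃ₐ[K] L} (hσ : σ⁻¹ = σ → σ = 1)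
    {d : (L ≃ₐ[K] L) → L} (hd : ∀ τ, τ (d τ⁻¹) = d τ) :
    (invPair σ).indicator d ∈ LinearMap.range (phiCoeff σ) := by
  classical
  by_cases hinv : σ⁻¹ = σ
  · obtain rfl := hσ hinv
    refine ⟨(2 : K)⁻¹ • d 1, funext fun τ => ?_⟩
    by_cases hτ : τ = 1
    · subst hτ
      simp only [phiCoeff_apply, invPair, inv_one, Set.mem_insert_iff, Set.mem_singleton_iff,
        or_self, Set.indicator_of_mem, Pi.add_apply, Pi.single_eq_same, AlgEquiv.one_apply]
      rw [← add_smul, ← two_mul, mul_inv_cancel₀ h2, one_smul]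
    · simp [phiCoeff_apply, invPair, hτ]
  · refine ⟨d σ, funext fun τ => ?_⟩
    by_cases hτ : τ = σ
    · subst hτ
      simp [phiCoeff_apply, invPair, Ne.symm hinv]
    by_cases hτ' : τ = σ⁻¹
    · subst hτ'
      simp [phiCoeff_apply, invPair, hinv, ← hd σ⁻¹]
    · simp [phiCoeff_apply, invPair, hτ, hτ']

variable [FiniteDimensional K L]

theorem twistedTraceForm_phiCoeff (σ : L ≃ₐ[K] L) (b : L) :
    twistedTraceForm K L (phiCoeff σ b) = phi K L b σ := by
  classical
  ext x y
  rw [phiCoeff_apply, map_add, LinearMap.add_apply, LinearMap.add_apply, twistedTraceForm_single,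
    twistedTraceForm_single, phi_apply, ← mul_assoc x (σ⁻¹ b), trace_mul_algEquiv_apply σ⁻¹,
    inv_inv, map_mul σ, AlgEquiv.aut_inv, AlgEquiv.apply_symm_apply]
  ring_nf

end

section

variable {K L : Type*} [Field K] [Field L] [Algebra K L]

theorem mem_symSubmodule {B : L →ₗ[K] L →ₗ[K] K} :
    B ∈ symSubmodule K L ↔ ∀ x y, B x y = B y x :=
  Iff.rfl

theorem range_phiCoeff_le_piSupported (σ : L ≃ₐ[K] L) :
    LinearMap.range (phiCoeff σ) ≤ piSupported K L (invPair σ) := by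
  rintro _ ⟨b, rfl⟩
  exact phiCoeff_mem_piSupported σ b

theorem phiCoeff_injective (h2 : (2 : K) ≠ 0) {σ : L ≃ₐ[K] L} (hσ : σ⁻¹ = σ → σ = 1) :
    Function.Injective (phiCoeff σ) := by
  classical
  refine (injective_iff_map_eq_zero _).2 fun b hb => ?_
  have hbσ := congrFun hb σ
  by_cases hinv : σ⁻¹ = σ
  · obtain rfl := hσ hinv
    simp only [phiCoeff_apply, inv_one, Pi.add_apply, Pi.single_eq_same,
      AlgEquiv.one_apply, Pi.zero_apply] at hbσ
    rw [← two_smul K b, smul_eq_zero] at hbσ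
    exact hbσ.resolve_left h2
  · simpa [phiCoeff_apply, Pi.single_apply, Ne.symm hinv] using hbσ

variable [FiniteDimensional K L]

theorem Asub_eq_range (σ : L ≃ₐ[K] L) :
    Asub K L σ = LinearMap.range (twistedTraceForm K L ∘ₗ phiCoeff σ) := by
  rw [Asub, ← Submodule.span_eq (LinearMap.range _), LinearMap.coe_range]
  congr 2
  funext b
  exact (twistedTraceForm_phiCoeff σ b).symm

variable [Algebra.IsSeparable K L]

theorem twistedTraceForm_mem_symSubmodule_iff {d : (L ≃ₐ[K] L) → L} :
    twistedTraceForm K L d ∈ symSubmodule K L ↔ ∀ τ, τ (d τ⁻¹) = d τ := by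
  have hflip : twistedTraceForm K L d ∈ symSubmodule K L ↔
      twistedTraceForm K L (fun τ => τ (d τ⁻¹)) = twistedTraceForm K L d := by
    simp only [mem_symSubmodule, LinearMap.ext_iff₂, ← twistedTraceForm_flip, eq_comm]
  rw [hflip, twistedTraceForm_injective.eq_iff, funext_iff]

theorem finrank_Asub (h2 : (2 : K) ≠ 0) {σ : L ≃ₐ[K] L} (hσ : σ⁻¹ = σ → σ = 1) :
    finrank K (Asub K L σ) = finrank K L := by
  have hinj : Function.Injective (twistedTraceForm K L ∘ₗ phiCoeff σ) :=
    twistedTraceForm_injective.comp (phiCoeff_injective h2 hσ)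
  rw [Asub_eq_range, LinearMap.finrank_range_of_inj hinj]

theorem nondegenerate_of_mem_Asub (h2 : (2 : K) ≠ 0) (hodd : Odd (finrank K L)) {σ : L ≃ₐ[K] L}
    {B : L →ₗ[K] L →ₗ[K] K} (hB : B ∈ Asub K L σ) (hB0 : B ≠ 0) {x : L}
    (hx : ∀ y, B x y = 0) : x = 0 := by
  rw [Asub_eq_range] at hB
  obtain ⟨b, rfl⟩ := hB
  rw [LinearMap.comp_apply, twistedTraceForm_phiCoeff] at hB0 hx
  refine phi_nondegenerate h2 hodd σ (fun hb => hB0 ?_) hx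
  rw [hb, ← twistedTraceForm_phiCoeff, map_zero, map_zero]

theorem iSupIndep_Asub {ι : Type*} {σs : ι → L ≃ₐ[K] L}
    (hdisj : Pairwise (Disjoint on fun i => invPair (σs i))) :
    iSupIndep fun i => Asub K L (σs i) := by
  simp_rw [Asub_eq_range, LinearMap.range_comp]
  exact LinearMap.iSupIndep_map _ twistedTraceForm_injective
    ((iSupIndep_piSupported hdisj).mono fun i => range_phiCoeff_le_piSupported (σs i))

theorem iSup_Asub_eq_symSubmodule [IsGalois K L] {ι : Type*} [Fintype ι] {σs : ι → L ≃ₐ[K] L}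
    (h2 : (2 : K) ≠ 0) (hσ : ∀ i, (σs i)⁻¹ = σs i → σs i = 1)
    (hdisj : Pairwise (Disjoint on fun i => invPair (σs i)))
    (hcover : ⋃ i, invPair (σs i) = Set.univ) :
    ⨆ i, Asub K L (σs i) = symSubmodule K L := by
  refine le_antisymm (iSup_le fun i => Asub_le_symSubmodule (σs i)) fun B hB => ?_
  obtain ⟨d, rfl⟩ := twistedTraceForm_surjective B
  have hd := twistedTraceForm_mem_symSubmodule_iff.1 hB
  rw [← sum_indicator_eq_self hdisj hcover d, map_sum]
  refine Submodule.sum_mem _ fun i _ => Submodule.mem_iSup_of_mem i ?_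
  obtain ⟨c, hc⟩ := indicator_mem_range_phiCoeff h2 (hσ i) hd
  rw [Asub_eq_range, ← hc]
  exact LinearMap.mem_range_self _ c

end

theorem sym_direct_sum_odd_general (K L : Type*) [Field K] [Field L] [Algebra K L]
    [FiniteDimensional K L] [IsGalois K L] (h2 : (2 : K) ≠ 0)
    (n m : ℕ) (hn : finrank K L = n) (hnm : n = 2 * m + 1)
    (σs : Fin (m + 1) → (L ≃ₐ[K] L))
    (hcover : ∀ τ : L ≃ₐ[K] L, ∃ i, τ = σs i ∨ τ = (σs i)⁻¹)
    (hdisj : ∀ i j, i ≠ j → σs i ≠ σs j ∧ σs i ≠ (σs j)⁻¹) :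
    iSupIndep (fun i => Asub K L (σs i)) ∧
    (⨆ i, Asub K L (σs i)) = symSubmodule K L ∧
    (∀ i, finrank K (Asub K L (σs i)) = n) ∧
    (∀ i, ∀ B ∈ Asub K L (σs i), B ≠ 0 →
      ∀ x : L, (∀ y : L, B x y = 0) → x = 0) := by
  have hodd : Odd (finrank K L) := ⟨m, hn.trans hnm⟩
  have hσ : ∀ i, (σs i)⁻¹ = σs i → σs i = 1 := fun _ =>
    eq_one_of_inv_eq_self_of_odd_card (IsGalois.card_aut_eq_finrank K L ▸ hodd)
  have hpair : Pairwise (Disjoint on fun i => invPair (σs i)) := fun i j hij =>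
    disjoint_invPair.2 (hdisj i j hij)
  have hunion : ⋃ i, invPair (σs i) = Set.univ :=
    Set.eq_univ_of_forall fun τ => Set.mem_iUnion.2 (hcover τ)
  exact ⟨iSupIndep_Asub hpair, iSup_Asub_eq_symSubmodule h2 hσ hpair hunion,
    fun i => (finrank_Asub h2 (hσ i)).trans hn,
    fun _ _ hB hB0 _ hx => nondegenerate_of_mem_Asub h2 hodd hB hB0 hx⟩

/-- Suppose `n = [L:K] = 2m+1` is odd and `σ_0 = 1, σ_1, …, σ_m ∈ G` are such
that `G = {1, σ_1, σ_1⁻¹, …, σ_m, σ_m⁻¹}` is a listing of `G` without repetitions.  Then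
`Sym_K(L) = A^{σ_0} ⊕ A^{σ_1} ⊕ ⋯ ⊕ A^{σ_m}` (an internal direct sum); moreover each
`A^{σ_i}` has `K`-dimension `n`, and every nonzero form belonging to any `A^{σ_i}` is
nondegenerate. -/
theorem sym_direct_sum_odd (K L : Type*) [Field K] [Field L] [Algebra K L]
    [FiniteDimensional K L] [IsGalois K L] (h2 : (2 : K) ≠ 0)
    (n m : ℕ) (hn : finrank K L = n) (hnm : n = 2 * m + 1)
    (σs : Fin (m + 1) → (L ≃ₐ[K] L)) (hσ0 : σs 0 = 1)
    (hcover : ∀ τ : L ≃ₐ[K] L, ∃ i, τ = σs i ∨ τ = (σs i)⁻¹)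
    (hdisj : ∀ i j, i ≠ j → σs i ≠ σs j ∧ σs i ≠ (σs j)⁻¹)
    (hself : ∀ i, i ≠ 0 → σs i ≠ (σs i)⁻¹) :
    iSupIndep (fun i => Asub K L (σs i)) ∧
    (⨆ i, Asub K L (σs i)) = symSubmodule K L ∧
    (∀ i, finrank K (Asub K L (σs i)) = n) ∧
    (∀ i, ∀ B ∈ Asub K L (σs i), B ≠ 0 →
      ∀ x : L, (∀ y : L, B x y = 0) → x = 0) :=
  sym_direct_sum_odd_general K L h2 n m hn hnm σs hcover hdisj
end

section
/- Let L/K be a cyclic Galois extension of even degree n with Gal(L/K) = ⟨σ⟩, and let i be such that the order of σ^i is congruent to 2 modulo 4 and is not equal to 2. Then there exist K-subspaces 𝒰_i and 𝒱_i of A^{σ^i} with A^{σ^i} = 𝒰_i ⊕ 𝒱_i (internal direct sum), where 𝒰_i and 𝒱_i each have K-dimension n/2, every nonzero form in 𝒰_i is nondegenerate, and every nonzero form in 𝒱_i has rank n − 2n/ord(σ^i). -/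
open Module

/-!
Let `τ = σ^i` have order `2r` with `r` odd, and let `s = τ^r`. By nondegeneracy of the trace
form, the radical of `φ_{b,τ}` is `{x | τ²x = c x}` with `c = -b / τ b`, and `b ↦ φ_{b,τ}` is
injective because `τ² ≠ 1`. Take `𝒰` and `𝒱` to be the images of the `±1`-eigenspaces of the
involution `s`; multiplication by an element `δ` with `s δ = -δ` shows that both have dimension
`n/2`. If `s b = ε b`, then `∏_{j<r} τ^{2j} c = -ε`, because `τ` acts as `s` on the
`τ²`-invariant element `∏_{j<r} τ^{2j} b`. For `ε = 1`, iterating `τ²x = c x` `r` times gives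
`x = -x`, so the form is nondegenerate. For `ε = -1`, Hilbert 90 for the cyclic group `⟨τ²⟩`
gives an eigenvector `x₀ ≠ 0`, and the radical is `F x₀`, where `F` is the fixed field of `τ²`,
of dimension `n/r = 2n/ord(τ)`.
-/

open Module.End

lemma Module.End.isCompl_eigenspace_one_eigenspace_neg_one {K V : Type*} [Field K]
    [AddCommGroup V] [Module K V] (h2 : (2 : K) ≠ 0) {f : End K V} (hf : f ^ 2 = 1) :
    IsCompl (f.eigenspace 1) (f.eigenspace (-1)) := by
  refine ⟨f.disjoint_genEigenspace ?_ 1 1, codisjoint_iff.2 (eq_top_iff.2 fun x _ => ?_)⟩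
  · intro h
    exact h2 (by linear_combination h)
  have hff (y : V) : f (f y) = y := by rw [← mul_apply, ← pow_two, hf, one_apply]
  have hx : x = (2 : K)⁻¹ • (x + f x) + (2 : K)⁻¹ • (x - f x) := by
    rw [← smul_add, add_add_sub_cancel, ← two_smul K, smul_smul, inv_mul_cancel₀ h2, one_smul]
  rw [hx]
  refine Submodule.add_mem_sup ?_ ?_ <;> rw [mem_eigenspace_iff]
  · simp [hff, add_comm]
  · simp [hff, ← smul_neg]

lemma orderOf_pow_two_of_orderOf_eq_two_mul {G : Type*} [Monoid G] {x : G} {r : ℕ}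
    (hx : orderOf x = 2 * r) : orderOf (x ^ 2) = r := by
  rw [orderOf_pow_of_dvd two_ne_zero ⟨r, hx⟩, hx, Nat.mul_div_cancel_left _ two_pos]

section Phi

variable {K L : Type*} [Field K] [Field L] [Algebra K L]

lemma phi_apply_eq_traceForm (b : L) (τ : L ≃ₐ[K] L) (x y : L) :
    phi K L b τ x y = Algebra.traceForm K L (τ.symm (b * x + τ b * τ (τ x))) y := by
  have hmove : Algebra.trace K L (b * x * τ y) = Algebra.trace K L (τ.symm (b * x) * y) := by
    rw [← Algebra.trace_eq_of_algEquiv τ (τ.symm (b * x) * y), map_mul τ,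
      AlgEquiv.apply_symm_apply]
  simp only [phi, LinearMap.add_apply, LinearMap.compl₁₂_apply, LinearMap.mulLeft_apply,
    LinearMap.comp_apply, AlgEquiv.toLinearMap_apply, LinearMap.id_apply,
    Algebra.traceForm_apply, map_add, map_mul, AlgEquiv.symm_apply_apply, hmove]

variable (K L) in
noncomputable def phiLinearMap (τ : L ≃ₐ[K] L) : L →ₗ[K] L →ₗ[K] L →ₗ[K] K where
  toFun b := phi K L b τ
  map_add' b b' := by
    ext x y
    simp only [phi_apply_eq_traceForm, LinearMap.add_apply, map_add, add_mul]
    ring_nf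
  map_smul' a b := by
    ext x y
    simp only [phi_apply_eq_traceForm, LinearMap.smul_apply, map_smul, smul_mul_assoc,
      ← smul_add, Algebra.traceForm_apply, RingHom.id_apply]

@[simp]
lemma phiLinearMap_apply (τ : L ≃ₐ[K] L) (b : L) : phiLinearMap K L τ b = phi K L b τ := rfl

lemma Asub_eq_range_s12 (τ : L ≃ₐ[K] L) : Asub K L τ = LinearMap.range (phiLinearMap K L τ) := by
  change Submodule.span K (Set.range (phiLinearMap K L τ)) = _
  rw [← LinearMap.coe_range, Submodule.span_eq]

variable [FiniteDimensional K L] [Algebra.IsSeparable K L]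

lemma mem_ker_phi_iff {b : L} {τ : L ≃ₐ[K] L} {x : L} :
    x ∈ LinearMap.ker (phi K L b τ) ↔ b * x + τ b * τ (τ x) = 0 := by
  rw [LinearMap.mem_ker, ← map_eq_zero_iff τ.symm τ.symm.injective]
  constructor
  · intro h
    exact (traceForm_nondegenerate K L).1 _ fun y => by rw [← phi_apply_eq_traceForm, h]; rfl
  · intro h
    ext y
    simp [phi_apply_eq_traceForm, h]

lemma phiLinearMap_injective {τ : L ≃ₐ[K] L} (hτ : τ ^ 2 ≠ 1) :
    Function.Injective (phiLinearMap K L τ) := by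
  refine (injective_iff_map_eq_zero _).2 fun b hb => ?_
  have hker : ∀ x, b * x + τ b * τ (τ x) = 0 := fun x =>
    mem_ker_phi_iff.1 (by rw [← phiLinearMap_apply, hb, LinearMap.ker_zero]; trivial)
  have hτb : τ b = -b := by simpa [eq_neg_iff_add_eq_zero, add_comm] using hker 1
  by_contra hb0
  refine hτ (AlgEquiv.ext fun x => ?_)
  have := hker x
  rw [hτb] at this
  have : b * (x - τ (τ x)) = 0 := by linear_combination this
  rw [mul_eq_zero, sub_eq_zero] at this
  simpa [pow_two] using (this.resolve_left hb0).symm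

end Phi

section Involution

variable {K L : Type*} [Field K] [Field L] [Algebra K L]

lemma AlgEquiv.toLinearMap_sq_of_orderOf_eq_two {s : L ≃ₐ[K] L} (hs : orderOf s = 2) :
    s.toLinearMap ^ 2 = 1 := by
  rw [← AlgEquiv.pow_toLinearMap, ← hs, pow_orderOf_eq_one, AlgEquiv.one_toLinearMap]

variable [FiniteDimensional K L]

lemma AlgEquiv.finrank_eigenspace_le_finrank_eigenspace_neg {s : L ≃ₐ[K] L}
    (hs : orderOf s = 2) (μ : K) :
    finrank K (eigenspace s.toLinearMap μ) ≤ finrank K (eigenspace s.toLinearMap (-μ)) := by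
  have hss (x : L) : s (s x) = x :=
    LinearMap.congr_fun (AlgEquiv.toLinearMap_sq_of_orderOf_eq_two hs) x
  obtain ⟨a, ha⟩ : ∃ a, s a ≠ a := by
    by_contra! h
    exact absurd hs (by rw [show s = 1 from AlgEquiv.ext h, orderOf_one]; decide)
  have hδ : s (a - s a) = -(a - s a) := by rw [map_sub, hss, neg_sub]
  have hinj : Function.Injective (LinearMap.mulLeft K (a - s a)) :=
    mul_right_injective₀ (sub_ne_zero.2 ha.symm)
  rw [(Submodule.equivMapOfInjective _ hinj (eigenspace s.toLinearMap μ)).finrank_eq]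
  refine Submodule.finrank_mono ?_
  rintro _ ⟨x, hx, rfl⟩
  rw [SetLike.mem_coe, mem_eigenspace_iff, AlgEquiv.toLinearMap_apply] at hx
  rw [mem_eigenspace_iff, LinearMap.mulLeft_apply, AlgEquiv.toLinearMap_apply, map_mul, hδ, hx,
    neg_smul, mul_smul_comm, neg_mul, smul_neg]

lemma AlgEquiv.finrank_eigenspace_of_orderOf_eq_two (h2 : (2 : K) ≠ 0) {s : L ≃ₐ[K] L}
    (hs : orderOf s = 2) :
    finrank K (eigenspace s.toLinearMap 1) = finrank K L / 2 ∧
      finrank K (eigenspace s.toLinearMap (-1)) = finrank K L / 2 := by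
  have hsum := Submodule.finrank_add_eq_of_isCompl
    (isCompl_eigenspace_one_eigenspace_neg_one h2 (AlgEquiv.toLinearMap_sq_of_orderOf_eq_two hs))
  have hle := s.finrank_eigenspace_le_finrank_eigenspace_neg hs 1
  have hge := neg_neg (1 : K) ▸ s.finrank_eigenspace_le_finrank_eigenspace_neg hs (-1)
  omega

end Involution

section OrbitProd

variable {K L : Type*} [Field K] [Field L] [Algebra K L]

/-- For `k = orderOf ρ` this is the norm of `y` down to the fixed field of `ρ`. -/
def orbitProd (ρ : L ≃ₐ[K] L) (k : ℕ) (y : L) : L :=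
  ∏ j ∈ Finset.range k, (ρ ^ j) y

variable (ρ : L ≃ₐ[K] L)

@[simp]
lemma orbitProd_zero (y : L) : orbitProd ρ 0 y = 1 := Finset.prod_range_zero _

lemma orbitProd_succ (k : ℕ) (y : L) : orbitProd ρ (k + 1) y = y * ρ (orbitProd ρ k y) := by
  simp only [orbitProd, Finset.prod_range_succ', map_prod, pow_zero, AlgEquiv.one_apply,
    pow_succ', AlgEquiv.mul_apply, mul_comm y]

lemma orbitProd_ne_zero {y : L} (hy : y ≠ 0) (k : ℕ) : orbitProd ρ k y ≠ 0 :=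
  Finset.prod_ne_zero_iff.2 fun j _ => (map_ne_zero_iff _ (ρ ^ j).injective).2 hy

lemma orbitProd_mul (k : ℕ) (y z : L) :
    orbitProd ρ k (y * z) = orbitProd ρ k y * orbitProd ρ k z := by
  simp only [orbitProd, map_mul, Finset.prod_mul_distrib]

lemma orbitProd_inv (k : ℕ) (y : L) : orbitProd ρ k y⁻¹ = (orbitProd ρ k y)⁻¹ := by
  simp only [orbitProd, map_inv₀, Finset.prod_inv_distrib]

lemma orbitProd_algebraMap (k : ℕ) (a : K) :
    orbitProd ρ k (algebraMap K L a) = algebraMap K L a ^ k := by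
  simp [orbitProd]

lemma map_orbitProd_of_commute {g : L ≃ₐ[K] L} (hg : Commute g ρ) (k : ℕ) (y : L) :
    g (orbitProd ρ k y) = orbitProd ρ k (g y) := by
  simp only [orbitProd, map_prod, ← AlgEquiv.mul_apply, (hg.pow_right _).eq]

lemma pow_apply_eq_orbitProd_mul {c x : L} (hx : ρ x = c * x) (k : ℕ) :
    (ρ ^ k) x = orbitProd ρ k c * x := by
  induction k with
  | zero => simp
  | succ k ih => rw [pow_succ', AlgEquiv.mul_apply, ih, map_mul, hx, orbitProd_succ]; ring

lemma mem_fixedField_zpowers_iff {x : L} :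
    x ∈ IntermediateField.fixedField (Subgroup.zpowers ρ) ↔ ρ x = x := by
  refine ⟨fun h => (IntermediateField.mem_fixedField_iff _ x).1 h ρ (Subgroup.mem_zpowers ρ),
    fun h => (IntermediateField.mem_fixedField_iff _ x).2 fun g hg => ?_⟩
  have : ρ ∈ MulAction.stabilizer (L ≃ₐ[K] L) x := h
  exact Subgroup.zpowers_le.2 this hg

lemma finrank_eq_finrank_fixedField_zpowers {ρ : L ≃ₐ[K] L} {c x₀ : L} {W : Submodule K L}
    (hW : ∀ x, x ∈ W ↔ ρ x = c * x) (hx₀ : x₀ ≠ 0) (hρx₀ : ρ x₀ = c * x₀) :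
    finrank K W = finrank K (IntermediateField.fixedField (Subgroup.zpowers ρ)) := by
  set F := IntermediateField.fixedField (Subgroup.zpowers ρ)
  have hW : W = F.toSubalgebra.toSubmodule.map (LinearMap.mulRight K x₀) := by
    ext x
    simp only [Submodule.mem_map, LinearMap.mulRight_apply, hW]
    constructor
    · intro hx
      have hc : c ≠ 0 := by rintro rfl; simp_all
      refine ⟨x / x₀, ?_, div_mul_cancel₀ x hx₀⟩
      change x / x₀ ∈ F
      rw [mem_fixedField_zpowers_iff, map_div₀, hx, hρx₀, mul_div_mul_left _ _ hc]
    · rintro ⟨y, hy, rfl⟩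
      rw [map_mul, (mem_fixedField_zpowers_iff ρ).1 hy, hρx₀, mul_left_comm]
  rw [hW, ← (Submodule.equivMapOfInjective _ (mul_left_injective₀ hx₀) _).finrank_eq]
  rfl

variable [FiniteDimensional K L]

lemma orbitProd_orderOf_mem_fixedField (y : L) :
    orbitProd ρ (orderOf ρ) y ∈ IntermediateField.fixedField (Subgroup.zpowers ρ) := by
  rw [mem_fixedField_zpowers_iff]
  rcases eq_or_ne y 0 with rfl | hy
  · simp [orbitProd, Finset.prod_eq_zero (Finset.mem_range.2 (orderOf_pos ρ))]
  apply mul_left_cancel₀ hy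
  rw [← orbitProd_succ, orbitProd, Finset.prod_range_succ, pow_orderOf_eq_one,
    AlgEquiv.one_apply, mul_comm]
  rfl

lemma finrank_fixedField_zpowers (ρ : L ≃ₐ[K] L) :
    finrank K (IntermediateField.fixedField (Subgroup.zpowers ρ)) = finrank K L / orderOf ρ := by
  rw [← Module.finrank_mul_finrank K (IntermediateField.fixedField (Subgroup.zpowers ρ)) L,
    IntermediateField.finrank_fixedField_eq_card, Nat.card_zpowers,
    Nat.mul_div_cancel _ (orderOf_pos ρ)]

end OrbitProd

section Hilbert90

variable {K L : Type*} [Field K] [Field L] [Algebra K L] [FiniteDimensional K L]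

lemma exists_sum_mul_pow_apply_ne_zero (ρ : L ≃ₐ[K] L) {a : ℕ → L} (ha : a 0 ≠ 0) :
    ∃ t, ∑ k ∈ Finset.range (orderOf ρ), a k * (ρ ^ k) t ≠ 0 := by
  by_contra! h
  let χ : Fin (orderOf ρ) → L →* L := fun k => ((ρ ^ (k : ℕ) : L ≃ₐ[K] L) : L →* L)
  have hχ : Function.Injective χ := fun k l hkl => Fin.ext <|
    pow_injOn_Iio_orderOf k.isLt l.isLt (AlgEquiv.ext fun x => DFunLike.congr_fun hkl x)
  have hsum : ∑ k : Fin (orderOf ρ), a k • ⇑(χ k) = 0 := funext fun t => by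
    simp only [Finset.sum_apply, Pi.smul_apply, smul_eq_mul, χ, MonoidHom.coe_coe, Pi.zero_apply]
    exact (Fin.sum_univ_eq_sum_range (fun k => a k * (ρ ^ k) t) _).trans (h t)
  exact ha (Fintype.linearIndependent_iff.1 ((linearIndependent_monoidHom L L).comp χ hχ)
    (fun k => a k) hsum ⟨0, orderOf_pos ρ⟩)

/-- Hilbert's Theorem 90 for the cyclic group generated by `ρ`. -/
theorem exists_ne_zero_apply_eq_mul (ρ : L ≃ₐ[K] L) {c : L} (hc0 : c ≠ 0)
    (hc : orbitProd ρ (orderOf ρ) c = 1) : ∃ x ≠ 0, ρ x = c * x := by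
  set e : ℕ → L := fun k => orbitProd ρ k c
  have he : ∀ k, ρ (e k)⁻¹ = c * (e (k + 1))⁻¹ := fun k => by
    simp only [e, map_inv₀, orbitProd_succ, mul_inv, ← mul_assoc, mul_inv_cancel₀ hc0, one_mul]
  obtain ⟨t, ht⟩ :=
    exists_sum_mul_pow_apply_ne_zero ρ (a := fun k => (e k)⁻¹) (by simp [e])
  set f : ℕ → L := fun k => (e k)⁻¹ * (ρ ^ k) t
  have hf : f (orderOf ρ) = f 0 := by
    simp only [f, e, hc, pow_orderOf_eq_one, orbitProd_zero, pow_zero]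
  refine ⟨_, ht, ?_⟩
  have hshift := (Finset.sum_range_succ' f (orderOf ρ)).symm.trans
    (Finset.sum_range_succ f (orderOf ρ))
  rw [hf, add_left_inj] at hshift
  rw [map_sum, ← hshift, Finset.mul_sum]
  refine Finset.sum_congr rfl fun k _ => ?_
  simp only [f, map_mul, he, pow_succ', AlgEquiv.mul_apply, mul_assoc]

end Hilbert90

section Radical

variable {K L : Type*} [Field K] [Field L] [Algebra K L] [FiniteDimensional K L]
  {τ : L ≃ₐ[K] L} {r : ℕ}

lemma orbitProd_neg_div (hτ : orderOf τ = 2 * r) (hr : Odd r) {b : L} (hb : b ≠ 0) {ε : K}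
    (hsb : (τ ^ r) b = ε • b) :
    orbitProd (τ ^ 2) r (-(b / τ b)) = -(algebraMap K L ε ^ r)⁻¹ := by
  set ρ := τ ^ 2
  set P := orbitProd ρ r b with hPdef
  have hρ : orderOf ρ = r := orderOf_pow_two_of_orderOf_eq_two_mul hτ
  have hP : P ∈ IntermediateField.fixedField (Subgroup.zpowers ρ) := by
    have := orbitProd_orderOf_mem_fixedField ρ b
    rwa [hρ] at this
  have hsP : (τ ^ r) P = algebraMap K L ε ^ r * P := by
    rw [map_orbitProd_of_commute _ (Commute.pow_pow_self τ r 2), hsb, Algebra.smul_def,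
      orbitProd_mul, orbitProd_algebraMap]
  -- `τ^(r+1)` is a power of `ρ` because `r` is odd, and `τ^r` is an involution
  have hτP : τ P = (τ ^ r) P := by
    obtain ⟨m, hm⟩ := hr
    have hfix : (τ ^ r) (τ P) = P := by
      rw [← AlgEquiv.mul_apply, ← pow_succ, show r + 1 = 2 * (m + 1) by omega, pow_mul]
      exact (IntermediateField.mem_fixedField_iff _ _).1 hP _ (Subgroup.npow_mem_zpowers ρ _)
    calc τ P = (τ ^ r) ((τ ^ r) (τ P)) := by
          rw [← AlgEquiv.mul_apply, ← pow_add, ← two_mul, ← hτ, pow_orderOf_eq_one,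
            AlgEquiv.one_apply]
      _ = (τ ^ r) P := by rw [hfix]
  have hPne : P ≠ 0 := orbitProd_ne_zero ρ hb r
  have hεne : algebraMap K L ε ^ r ≠ 0 := by
    intro h; rw [h, zero_mul] at hsP
    exact hPne ((map_eq_zero_iff _ (τ ^ r).injective).1 hsP)
  have hc : -(b / τ b) = algebraMap K L (-1) * (b * (τ b)⁻¹) := by simp [div_eq_mul_inv]
  rw [hc, orbitProd_mul, orbitProd_mul, orbitProd_algebraMap, orbitProd_inv,
    ← map_orbitProd_of_commute ρ (Commute.self_pow τ 2), ← hPdef, hτP, hsP, map_neg, map_one,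
    hr.neg_one_pow]
  field_simp

variable [Algebra.IsSeparable K L]

lemma mem_ker_phi_iff_eq_mul {b : L} (hb : b ≠ 0) {x : L} :
    x ∈ LinearMap.ker (phi K L b τ) ↔ (τ ^ 2) x = -(b / τ b) * x := by
  have hτb : τ b ≠ 0 := (map_ne_zero_iff _ τ.injective).2 hb
  rw [mem_ker_phi_iff, pow_two, AlgEquiv.mul_apply]
  field_simp
  constructor <;> intro h <;> linear_combination h

lemma ker_phi_eq_bot (h2 : (2 : K) ≠ 0) (hτ : orderOf τ = 2 * r) (hr : Odd r) {b : L}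
    (hb : b ∈ eigenspace (τ ^ r).toLinearMap 1) (hb0 : b ≠ 0) :
    LinearMap.ker (phi K L b τ) = ⊥ := by
  rw [mem_eigenspace_iff, AlgEquiv.toLinearMap_apply] at hb
  refine (Submodule.eq_bot_iff _).2 fun x hx => ?_
  have hρx := pow_apply_eq_orbitProd_mul _ ((mem_ker_phi_iff_eq_mul hb0).1 hx) r
  rw [orbitProd_neg_div hτ hr hb0 hb, ← pow_mul, ← hτ, pow_orderOf_eq_one, AlgEquiv.one_apply,
    map_one, one_pow, inv_one] at hρx
  have h2L : (2 : L) ≠ 0 := by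
    rw [← map_ofNat (algebraMap K L) 2]
    exact (map_ne_zero _).2 h2
  exact (mul_eq_zero.1 (by linear_combination hρx : (2 : L) * x = 0)).resolve_left h2L

lemma finrank_ker_phi (hτ : orderOf τ = 2 * r) (hr : Odd r) {b : L}
    (hb : b ∈ eigenspace (τ ^ r).toLinearMap (-1)) (hb0 : b ≠ 0) :
    finrank K (LinearMap.ker (phi K L b τ)) = finrank K L / r := by
  rw [mem_eigenspace_iff, AlgEquiv.toLinearMap_apply] at hb
  have hρ : orderOf (τ ^ 2) = r := orderOf_pow_two_of_orderOf_eq_two_mul hτ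
  have hc0 : -(b / τ b) ≠ 0 :=
    neg_ne_zero.2 (div_ne_zero hb0 ((map_ne_zero_iff _ τ.injective).2 hb0))
  have hN : orbitProd (τ ^ 2) (orderOf (τ ^ 2)) (-(b / τ b)) = 1 := by
    rw [hρ, orbitProd_neg_div hτ hr hb0 hb, map_neg, map_one, hr.neg_one_pow]; norm_num
  obtain ⟨x₀, hx₀, hρx₀⟩ := exists_ne_zero_apply_eq_mul _ hc0 hN
  rw [finrank_eq_finrank_fixedField_zpowers (fun x => mem_ker_phi_iff_eq_mul hb0) hx₀ hρx₀,
    finrank_fixedField_zpowers, hρ]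

end Radical

theorem Asub_decomposition_ord_two_mod_four_general (K L : Type*) [Field K] [Field L] [Algebra K L]
    [FiniteDimensional K L] [IsGalois K L] (h2 : (2 : K) ≠ 0)
    (n : ℕ) (hn : finrank K L = n)
    (σ : L ≃ₐ[K] L)
    (i : ℕ) (hordmod : orderOf (σ ^ i) % 4 = 2) (hordne : orderOf (σ ^ i) ≠ 2) :
    ∃ 𝒰 𝒱 : Submodule K (L →ₗ[K] L →ₗ[K] K),
      𝒰 ⊔ 𝒱 = Asub K L (σ ^ i) ∧ 𝒰 ⊓ 𝒱 = ⊥ ∧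
      finrank K 𝒰 = n / 2 ∧ finrank K 𝒱 = n / 2 ∧
      (∀ B ∈ 𝒰, B ≠ 0 → LinearMap.ker B = ⊥) ∧
      (∀ B ∈ 𝒱, B ≠ 0 →
        finrank K L - finrank K (LinearMap.ker B) = n - 2 * n / orderOf (σ ^ i)) := by
  set τ := σ ^ i
  obtain ⟨r, hτ, hr⟩ : ∃ r, orderOf τ = 2 * r ∧ Odd r :=
    ⟨orderOf τ / 2, by omega, orderOf τ / 4, by omega⟩
  have hτ2 : τ ^ 2 ≠ 1 := fun h => by have := orderOf_le_of_pow_eq_one two_pos h; omega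
  have hs : orderOf (τ ^ r) = 2 := by
    rw [orderOf_pow_of_dvd (by omega) ⟨2, by rw [hτ, mul_comm]⟩, hτ,
      Nat.mul_div_cancel _ (by omega)]
  set s := (τ ^ r).toLinearMap
  set Φ := phiLinearMap K L τ
  have hΦ : Function.Injective Φ := phiLinearMap_injective hτ2
  have hcompl :=
    isCompl_eigenspace_one_eigenspace_neg_one h2 (AlgEquiv.toLinearMap_sq_of_orderOf_eq_two hs)
  obtain ⟨hdimPlus, hdimMinus⟩ := AlgEquiv.finrank_eigenspace_of_orderOf_eq_two h2 hs
  refine ⟨(eigenspace s 1).map Φ, (eigenspace s (-1)).map Φ, ?_, ?_, ?_, ?_, ?_, ?_⟩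
  · rw [← Submodule.map_sup, hcompl.sup_eq_top, Submodule.map_top, Asub_eq_range_s12]
  · rw [← Submodule.map_inf _ hΦ, hcompl.inf_eq_bot, Submodule.map_bot]
  · rw [← (Submodule.equivMapOfInjective _ hΦ _).finrank_eq, hdimPlus, hn]
  · rw [← (Submodule.equivMapOfInjective _ hΦ _).finrank_eq, hdimMinus, hn]
  · rintro _ ⟨b, hb, rfl⟩ hB
    exact ker_phi_eq_bot h2 hτ hr hb (by rintro rfl; exact hB (map_zero Φ))
  · rintro _ ⟨b, hb, rfl⟩ hB
    rw [phiLinearMap_apply, finrank_ker_phi hτ hr hb (by rintro rfl; exact hB (map_zero Φ)), hτ,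
      hn, Nat.mul_div_mul_left _ _ two_pos]

/-- Let `L/K` be a cyclic Galois extension of even degree `n` with
`Gal(L/K) = ⟨σ⟩`, and let `i` be such that the order of `σ^i` is congruent to `2` modulo
`4` and is not equal to `2`.  Then there exist `K`-subspaces `𝒰_i` and `𝒱_i` of `A^{σ^i}`
with `A^{σ^i} = 𝒰_i ⊕ 𝒱_i` (internal direct sum), where `𝒰_i` and `𝒱_i` each have
`K`-dimension `n/2`, every nonzero form in `𝒰_i` is nondegenerate, and every nonzero form
in `𝒱_i` has rank `n − 2n/ord(σ^i)`. -/
theorem Asub_decomposition_ord_two_mod_four (K L : Type*) [Field K] [Field L] [Algebra K L]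
    [FiniteDimensional K L] [IsGalois K L] (h2 : (2 : K) ≠ 0)
    (n : ℕ) (hn : finrank K L = n) (hneven : Even n)
    (σ : L ≃ₐ[K] L) (hgen : ∀ τ : L ≃ₐ[K] L, τ ∈ Subgroup.zpowers σ)
    (i : ℕ) (hordmod : orderOf (σ ^ i) % 4 = 2) (hordne : orderOf (σ ^ i) ≠ 2) :
    ∃ 𝒰 𝒱 : Submodule K (L →ₗ[K] L →ₗ[K] K),
      𝒰 ⊔ 𝒱 = Asub K L (σ ^ i) ∧ 𝒰 ⊓ 𝒱 = ⊥ ∧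
      finrank K 𝒰 = n / 2 ∧ finrank K 𝒱 = n / 2 ∧
      (∀ B ∈ 𝒰, B ≠ 0 → LinearMap.ker B = ⊥) ∧
      (∀ B ∈ 𝒱, B ≠ 0 →
        finrank K L - finrank K (LinearMap.ker B) = n - 2 * n / orderOf (σ ^ i)) :=
  Asub_decomposition_ord_two_mod_four_general K L h2 n hn σ i hordmod hordne
end
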